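/- Let q be an integer, R the free ℤ-algebra on v, x, y₁, y₂ and I the two-sided ideal generated by the seven relations r₁,...,r₇ of the paramodular Hecke algebra. Then in R/I, the element z₂ = (q-1)vx - (y₁+y₂) commutes with each of v, x, y₁, and y₂. -/

import Mathlib

noncomputable section

/-- The free `ℤ`-algebra on the four non-commuting variables `v, x, y₁, y₂`. -/
abbrev R : Type := FreeAlgebra ℤ (Fin 4)

def v : R := FreeAlgebra.ι ℤ 0
def x : R := FreeAlgebra.ι ℤ 1
def y₁ : R := FreeAlgebra.ι ℤ 2
def y₂ : R := FreeAlgebra.ι ℤ 3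

def r₁ : R := v * x - x * v
def r₂ : R := v * y₁ - y₂ * v
def r₃ : R := v * y₂ - y₁ * v
def r₄ (q : ℤ) : R := x * y₁ - y₁ * x + (1 - (q : R) ^ 2) * (v * y₁)
  - (1 - (q : R) ^ 2) * (v * y₂)
def r₅ (q : ℤ) : R := x * y₂ - y₂ * x - (1 - (q : R) ^ 2) * (v * y₁)
  + (1 - (q : R) ^ 2) * (v * y₂)
def r₆ (q : ℤ) : R := y₁ * y₂ - y₂ * y₁
  - ((q : R) - 1) ^ 2 * ((q : R) + 1) * (v ^ 2 * y₁)
  + ((q : R) - 1) ^ 2 * ((q : R) + 1) * (v ^ 2 * y₂)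
  + ((q : R) - 1) * (v * x * y₁) - ((q : R) - 1) * (v * x * y₂)
def r₇ (q : ℤ) : R := y₁ * y₂ + (q : R) ^ 2 * ((q : R) + 1) ^ 2 * v ^ 4
  + (q : R) * ((q : R) ^ 2 - 1) * (v ^ 3 * x) - (q : R) * (v ^ 2 * x ^ 2)
  - ((q : R) - 1) * (v * x * y₂) + (q : R) * ((q : R) + 1) * (v ^ 2 * y₁)
  + (1 + (q : R) ^ 3) * (v ^ 2 * y₂)

/-- The relation generating the two-sided ideal `I` spanned by `r₁,…,r₇`. -/
def rel (q : ℤ) : R → R → Prop := fun a b =>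
  b = 0 ∧ (a = r₁ ∨ a = r₂ ∨ a = r₃ ∨ a = r₄ q ∨ a = r₅ q ∨ a = r₆ q ∨ a = r₇ q)

/-- The quotient `R/I` of the free algebra by the two-sided ideal generated by
the seven relations: the paramodular Hecke algebra presentation. -/
abbrev H (q : ℤ) : Type := RingQuot (rel q)

/-- The quotient map `R → R/I`. -/
def mk (q : ℤ) : R →ₐ[ℤ] H q := RingQuot.mkAlgHom ℤ (rel q)

/-!
For each generator `g`, the commutator `Z₂ g - g Z₂` is, in any ring, an explicit two-sided
combination of the relators `r₁, …, r₆`; for instance `[Z₂, V] = -(q-1) V r₁ + r₂ + r₃`. So `Z₂`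
commutes with the generators wherever these relators vanish, in particular in `R/I`.
-/

section Relations

variable {A : Type*} [Ring A] (q : ℤ) {V X Y₁ Y₂ : A}

def Z₂ (V X Y₁ Y₂ : A) : A := ((q : A) - 1) * (V * X) - (Y₁ + Y₂)

theorem map_Z₂ {B F : Type*} [Ring B] [FunLike F A B] [RingHomClass F A B] (f : F)
    (V X Y₁ Y₂ : A) : f (Z₂ q V X Y₁ Y₂) = Z₂ q (f V) (f X) (f Y₁) (f Y₂) := by
  simp [Z₂]

theorem commute_Z₂_V (h₁ : V * X - X * V = 0) (h₂ : V * Y₁ - Y₂ * V = 0)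
    (h₃ : V * Y₂ - Y₁ * V = 0) : Commute (Z₂ q V X Y₁ Y₂) V := by
  have key : Z₂ q V X Y₁ Y₂ * V - V * Z₂ q V X Y₁ Y₂ =
      -(((q : A) - 1) * (V * (V * X - X * V))) + (V * Y₁ - Y₂ * V) + (V * Y₂ - Y₁ * V) := by
    -- `(q : A)` is central, but only as `ℤ`-scalars can `match_scalars` collect the coefficients.
    simp only [Z₂, sub_mul, mul_sub, add_mul, mul_add, one_mul, mul_assoc, ← zsmul_eq_mul,
      mul_smul_comm, smul_mul_assoc]
    match_scalars <;> ring
  rw [h₁, h₂, h₃] at key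
  exact sub_eq_zero.mp (by simpa using key)

theorem commute_Z₂_X (h₁ : V * X - X * V = 0)
    (h₄ : X * Y₁ - Y₁ * X + (1 - (q : A) ^ 2) * (V * Y₁) - (1 - (q : A) ^ 2) * (V * Y₂) = 0)
    (h₅ : X * Y₂ - Y₂ * X - (1 - (q : A) ^ 2) * (V * Y₁) + (1 - (q : A) ^ 2) * (V * Y₂) = 0) :
    Commute (Z₂ q V X Y₁ Y₂) X := by
  have key : Z₂ q V X Y₁ Y₂ * X - X * Z₂ q V X Y₁ Y₂ =
      ((q : A) - 1) * ((V * X - X * V) * X)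
        + (X * Y₁ - Y₁ * X + (1 - (q : A) ^ 2) * (V * Y₁) - (1 - (q : A) ^ 2) * (V * Y₂))
        + (X * Y₂ - Y₂ * X - (1 - (q : A) ^ 2) * (V * Y₁) + (1 - (q : A) ^ 2) * (V * Y₂)) := by
    simp only [Z₂, sub_mul, mul_sub, add_mul, mul_add, one_mul, mul_assoc, pow_two,
      ← zsmul_eq_mul, mul_smul_comm, smul_mul_assoc]
    match_scalars <;> ring
  rw [h₁, h₄, h₅] at key
  exact sub_eq_zero.mp (by simpa using key)

theorem commute_Z₂_Y₁ (h₃ : V * Y₂ - Y₁ * V = 0)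
    (h₅ : X * Y₂ - Y₂ * X - (1 - (q : A) ^ 2) * (V * Y₁) + (1 - (q : A) ^ 2) * (V * Y₂) = 0)
    (h₆ : Y₁ * Y₂ - Y₂ * Y₁ - ((q : A) - 1) ^ 2 * ((q : A) + 1) * (V ^ 2 * Y₁)
      + ((q : A) - 1) ^ 2 * ((q : A) + 1) * (V ^ 2 * Y₂)
      + ((q : A) - 1) * (V * X * Y₁) - ((q : A) - 1) * (V * X * Y₂) = 0) :
    Commute (Z₂ q V X Y₁ Y₂) Y₁ := by
  have key : Z₂ q V X Y₁ Y₂ * Y₁ - Y₁ * Z₂ q V X Y₁ Y₂ =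
      ((q : A) - 1) * (V * (X * Y₂ - Y₂ * X - (1 - (q : A) ^ 2) * (V * Y₁)
        + (1 - (q : A) ^ 2) * (V * Y₂)))
      + ((q : A) - 1) * ((V * Y₂ - Y₁ * V) * X)
      + (Y₁ * Y₂ - Y₂ * Y₁ - ((q : A) - 1) ^ 2 * ((q : A) + 1) * (V ^ 2 * Y₁)
        + ((q : A) - 1) ^ 2 * ((q : A) + 1) * (V ^ 2 * Y₂)
        + ((q : A) - 1) * (V * X * Y₁) - ((q : A) - 1) * (V * X * Y₂)) := by
    simp only [Z₂, sub_mul, mul_sub, add_mul, mul_add, one_mul, mul_assoc, pow_two,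
      ← zsmul_eq_mul, mul_smul_comm, smul_mul_assoc]
    match_scalars <;> ring
  rw [h₃, h₅, h₆] at key
  exact sub_eq_zero.mp (by simpa using key)

theorem commute_Z₂_Y₂ (h₂ : V * Y₁ - Y₂ * V = 0)
    (h₄ : X * Y₁ - Y₁ * X + (1 - (q : A) ^ 2) * (V * Y₁) - (1 - (q : A) ^ 2) * (V * Y₂) = 0)
    (h₆ : Y₁ * Y₂ - Y₂ * Y₁ - ((q : A) - 1) ^ 2 * ((q : A) + 1) * (V ^ 2 * Y₁)
      + ((q : A) - 1) ^ 2 * ((q : A) + 1) * (V ^ 2 * Y₂)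
      + ((q : A) - 1) * (V * X * Y₁) - ((q : A) - 1) * (V * X * Y₂) = 0) :
    Commute (Z₂ q V X Y₁ Y₂) Y₂ := by
  have key : Z₂ q V X Y₁ Y₂ * Y₂ - Y₂ * Z₂ q V X Y₁ Y₂ =
      ((q : A) - 1) * (V * (X * Y₁ - Y₁ * X + (1 - (q : A) ^ 2) * (V * Y₁)
        - (1 - (q : A) ^ 2) * (V * Y₂)))
      + ((q : A) - 1) * ((V * Y₁ - Y₂ * V) * X)
      - (Y₁ * Y₂ - Y₂ * Y₁ - ((q : A) - 1) ^ 2 * ((q : A) + 1) * (V ^ 2 * Y₁)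
        + ((q : A) - 1) ^ 2 * ((q : A) + 1) * (V ^ 2 * Y₂)
        + ((q : A) - 1) * (V * X * Y₁) - ((q : A) - 1) * (V * X * Y₂)) := by
    simp only [Z₂, sub_mul, mul_sub, add_mul, mul_add, one_mul, mul_assoc, pow_two,
      ← zsmul_eq_mul, mul_smul_comm, smul_mul_assoc]
    match_scalars <;> ring
  rw [h₂, h₄, h₆] at key
  exact sub_eq_zero.mp (by simpa using key)

end Relations

theorem mk_eq_zero_of_rel (q : ℤ) {a : R} (h : rel q a 0) : mk q a = 0 :=
  (RingQuot.mkAlgHom_rel ℤ h).trans (map_zero _)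

/-- In `R/I` the element `z₂ = (q-1)vx - (y₁+y₂)` commutes with `v, x, y₁, y₂`. -/
theorem stmt_9 (q : ℤ) :
    mk q (((q : R) - 1) * (v * x) - (y₁ + y₂)) * mk q v
        = mk q v * mk q (((q : R) - 1) * (v * x) - (y₁ + y₂)) ∧
    mk q (((q : R) - 1) * (v * x) - (y₁ + y₂)) * mk q x
        = mk q x * mk q (((q : R) - 1) * (v * x) - (y₁ + y₂)) ∧
    mk q (((q : R) - 1) * (v * x) - (y₁ + y₂)) * mk q y₁
        = mk q y₁ * mk q (((q : R) - 1) * (v * x) - (y₁ + y₂)) ∧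
    mk q (((q : R) - 1) * (v * x) - (y₁ + y₂)) * mk q y₂
        = mk q y₂ * mk q (((q : R) - 1) * (v * x) - (y₁ + y₂)) := by
  have h₁ := mk_eq_zero_of_rel q (a := r₁) ⟨rfl, by simp⟩
  have h₂ := mk_eq_zero_of_rel q (a := r₂) ⟨rfl, by simp⟩
  have h₃ := mk_eq_zero_of_rel q (a := r₃) ⟨rfl, by simp⟩
  have h₄ := mk_eq_zero_of_rel q (a := r₄ q) ⟨rfl, by simp⟩
  have h₅ := mk_eq_zero_of_rel q (a := r₅ q) ⟨rfl, by simp⟩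
  have h₆ := mk_eq_zero_of_rel q (a := r₆ q) ⟨rfl, by simp⟩
  simp only [r₁, r₂, r₃, r₄, r₅, r₆, map_sub, map_add, map_mul, map_pow, map_one,
    map_intCast] at h₁ h₂ h₃ h₄ h₅ h₆
  show Commute (mk q (Z₂ q v x y₁ y₂)) (mk q v) ∧ Commute (mk q (Z₂ q v x y₁ y₂)) (mk q x) ∧
    Commute (mk q (Z₂ q v x y₁ y₂)) (mk q y₁) ∧ Commute (mk q (Z₂ q v x y₁ y₂)) (mk q y₂)
  rw [map_Z₂]
  exact ⟨commute_Z₂_V q h₁ h₂ h₃, commute_Z₂_X q h₁ h₄ h₅, commute_Z₂_Y₁ q h₃ h₅ h₆,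
    commute_Z₂_Y₂ q h₂ h₄ h₆⟩
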